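/- arXiv:quant-ph/0307149 — 6 statements merged into one kernel-verified Lean document; each statement's English description precedes it below -/
import Mathlib

section
/- Let m ≥ 1 be an integer, let p(1), …, p(m) be positive real numbers summing to 1, let r ≥ 0, and let w(i,j) for i, j ∈ {1, …, m} be nonnegative reals satisfying w(i,j) = w(j,i) for all i, j and ∑_{i,j} w(i,j) ≥ r. Then there exists a nonempty subset U ⊆ {1, …, m} such that for all i ∈ U, ∑_{j ∈ U} w(i,j) ≥ r·p(i)/2. -/
lemma aux_stmt_0 (m : ℕ) (p : Fin m → ℝ) (hp : ∀ i, 0 < p i) (r : ℝ) (hr : 0 ≤ r)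
    (w : Fin m → Fin m → ℝ) (hw : ∀ i j, 0 ≤ w i j) (hsym : ∀ i j, w i j = w j i) :
    ∀ U : Finset (Fin m), U.Nonempty →
      r * ∑ i ∈ U, p i ≤ ∑ i ∈ U, ∑ j ∈ U, w i j →
      ∃ V : Finset (Fin m), V ⊆ U ∧ V.Nonempty ∧ ∀ i ∈ V, r * p i / 2 ≤ ∑ j ∈ V, w i j := by
  intro U
  induction U using Finset.strongInduction with
  | _ U ih =>
    intro hne hinv
    by_cases hall : ∀ i ∈ U, r * p i / 2 ≤ ∑ j ∈ U, w i j
    · exact ⟨U, subset_rfl, hne, hall⟩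
    · push_neg at hall
      obtain ⟨i, hiU, hilt⟩ := hall
      set U' := U.erase i with hU'
      have hiU' : i ∉ U' := Finset.notMem_erase i U
      have hins : insert i U' = U := Finset.insert_erase hiU
      set D := ∑ j ∈ U, w i j with hD
      -- decompose the double sum
      have hdec : ∑ a ∈ U, ∑ b ∈ U, w a b
          = D + (∑ a ∈ U', w a i + ∑ a ∈ U', ∑ b ∈ U', w a b) := by
        rw [← hins, Finset.sum_insert hiU']
        congr 1
        · rw [hins]
        · rw [← Finset.sum_add_distrib]
          apply Finset.sum_congr rfl
          intro a _
          exact Finset.sum_insert hiU'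
      have hle : ∑ a ∈ U', w a i ≤ D := by
        have : ∑ a ∈ U', w a i = ∑ a ∈ U', w i a := by
          apply Finset.sum_congr rfl; intro a _; exact hsym a i
        rw [this, hD]
        exact Finset.sum_le_sum_of_subset_of_nonneg (Finset.erase_subset i U)
          (fun j _ _ => hw i j)
      have hstrict : r * ∑ a ∈ U', p a < ∑ a ∈ U', ∑ b ∈ U', w a b := by
        have hsump : ∑ a ∈ U', p a = ∑ a ∈ U, p a - p i := by
          rw [← hins, Finset.sum_insert hiU']; ring
        have h2D : 2 * D < r * p i := by linarith
        have : ∑ a ∈ U, ∑ b ∈ U, w a b ≤ 2 * D + ∑ a ∈ U', ∑ b ∈ U', w a b := by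
          rw [hdec]; linarith
        rw [hsump]
        nlinarith
      have hne' : U'.Nonempty := by
        rcases U'.eq_empty_or_nonempty with h | h
        · exfalso
          rw [h] at hstrict
          simp at hstrict
        · exact h
      obtain ⟨V, hVsub, hVne, hVdeg⟩ := ih U' (Finset.erase_ssubset hiU) hne' hstrict.le
      exact ⟨V, hVsub.trans (Finset.erase_subset i U), hVne, hVdeg⟩

/-- **Weighted subgraph lemma.** Given positive reals `p 1, …, p m` summing to `1`,
`r ≥ 0`, and symmetric nonnegative weights `w i j` with `∑_{i,j} w i j ≥ r`, there is a
nonempty subset `U ⊆ {1,…,m}` such that `∑_{j ∈ U} w i j ≥ r * p i / 2` for every `i ∈ U`. -/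
theorem stmt_0 (m : ℕ) (hm : 1 ≤ m) (p : Fin m → ℝ) (hp : ∀ i, 0 < p i)
    (hpsum : ∑ i, p i = 1) (r : ℝ) (hr : 0 ≤ r)
    (w : Fin m → Fin m → ℝ) (hw : ∀ i j, 0 ≤ w i j)
    (hsym : ∀ i j, w i j = w j i)
    (hwr : r ≤ ∑ i, ∑ j, w i j) :
    ∃ U : Finset (Fin m), U.Nonempty ∧ ∀ i ∈ U, r * p i / 2 ≤ ∑ j ∈ U, w i j := by
  have huniv : (Finset.univ : Finset (Fin m)).Nonempty := by
    have : 0 < m := hm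
    exact ⟨⟨0, this⟩, Finset.mem_univ _⟩
  have hinv : r * ∑ i, p i ≤ ∑ i, ∑ j, w i j := by
    rw [hpsum]; simpa using hwr
  obtain ⟨V, _, hVne, hVdeg⟩ := aux_stmt_0 m p hp r hr w hw hsym Finset.univ huniv hinv
  exact ⟨V, hVne, hVdeg⟩
end

section
/- Let G be a connected finite simple graph with vertex set V, let L ≥ 1, and let x_0, x_1, …, x_{L−1} ∈ V satisfy, for each t < L−1, either x_{t+1} = x_t or x_{t+1} adjacent to x_t in G. Set h = x_{L−1} and define f : V → ℕ by f(v) = min{t : x_t = v} if v ∈ {x_0,…,x_{L−1}}, and f(v) = dist_G(v, h) + L otherwise, where dist_G denotes graph distance. Then x_0 is a local minimum of f, and it is the unique local minimum: for every vertex v ≠ x_0 there exists a neighbor w of v with f(w) < f(v). -/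
/-!
The tail `x 0` is hit at time `0`, so it minimises `f`. A vertex `v ≠ x 0` on the snake is first
hit at some time `m > 0`; the step into `x m = v` cannot be a stall (that would hit `v` at
`m - 1`), so `x (m - 1)` is a neighbour of `v` hit no later than `m - 1`. A vertex off the snake
has a neighbour one step closer to the head `x (L - 1)`; that neighbour has smaller `f` whether it
lies off the snake (distance drops) or on it (then `f < L`).
-/

namespace SimpleGraph

variable {V : Type*} {G : SimpleGraph V}

lemma Reachable.exists_adj_dist_lt {u v : V} (hr : G.Reachable v u) (hne : v ≠ u) :
    ∃ w, G.Adj v w ∧ G.dist w u < G.dist v u := by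
  obtain ⟨p, hp⟩ := hr.exists_walk_length_eq_dist
  cases p with
  | nil => exact absurd rfl hne
  | cons hadj q =>
    refine ⟨_, hadj, ?_⟩
    have := dist_le q
    rw [Walk.length_cons] at hp
    omega

end SimpleGraph

section FirstHit

variable {V : Type*} (x : ℕ → V) (L : ℕ)

/-- The first time `t < L` at which `x t = v` (`0` if there is none). -/
noncomputable def firstHit (v : V) : ℕ := sInf {t | t < L ∧ x t = v}

variable {x L}

lemma firstHit_spec {v : V} (hv : ∃ t < L, x t = v) :
    firstHit x L v < L ∧ x (firstHit x L v) = v :=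
  Nat.sInf_mem hv

lemma firstHit_le {t : ℕ} (ht : t < L) : firstHit x L (x t) ≤ t :=
  Nat.sInf_le ⟨ht, rfl⟩

lemma firstHit_zero (hL : 0 < L) : firstHit x L (x 0) = 0 :=
  Nat.le_zero.mp (firstHit_le hL)

lemma exists_adj_firstHit_lt {G : SimpleGraph V}
    (hstep : ∀ t, t + 1 < L → x (t + 1) = x t ∨ G.Adj (x t) (x (t + 1)))
    {v : V} (hv : ∃ t < L, x t = v) (hv0 : v ≠ x 0) :
    ∃ w, G.Adj v w ∧ (∃ t < L, x t = w) ∧ firstHit x L w < firstHit x L v := by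
  obtain ⟨hmL, hxm⟩ := firstHit_spec hv
  obtain ⟨k, hk⟩ : ∃ k, firstHit x L v = k + 1 :=
    Nat.exists_eq_add_one.mpr (Nat.pos_of_ne_zero fun h => hv0 (by rw [← hxm, h]))
  rw [hk] at hmL hxm
  have hkL : k < L := by omega
  rcases hstep k hmL with hstall | hadj
  · have := firstHit_le (x := x) hkL
    rw [← hstall, hxm] at this
    omega
  · refine ⟨x k, hxm ▸ hadj.symm, ⟨k, hkL, rfl⟩, ?_⟩
    have := firstHit_le (x := x) hkL
    omega

end FirstHit

theorem stmt_5_general {V : Type*} (G : SimpleGraph V) (hG : G.Connected)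
    (L : ℕ) (hL : 1 ≤ L) (x : ℕ → V)
    (hstep : ∀ t, t + 1 < L → x (t + 1) = x t ∨ G.Adj (x t) (x (t + 1)))
    (f : V → ℕ)
    (hf1 : ∀ v : V, (∃ t < L, x t = v) → f v = sInf {t | t < L ∧ x t = v})
    (hf2 : ∀ v : V, (¬ ∃ t < L, x t = v) → f v = G.dist v (x (L - 1)) + L) :
    (∀ w, G.Adj (x 0) w → f (x 0) ≤ f w) ∧
    (∀ v, v ≠ x 0 → ∃ w, G.Adj v w ∧ f w < f v) := by
  have hf_snake : ∀ v, (∃ t < L, x t = v) → f v = firstHit x L v := hf1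
  refine ⟨fun w _ => ?_, fun v hv0 => ?_⟩
  · rw [hf_snake _ ⟨0, hL, rfl⟩, firstHit_zero hL]
    exact Nat.zero_le _
  by_cases hv : ∃ t < L, x t = v
  · obtain ⟨w, hadj, hw, hlt⟩ := exists_adj_firstHit_lt hstep hv hv0
    exact ⟨w, hadj, by rwa [hf_snake w hw, hf_snake v hv]⟩
  · have hvh : v ≠ x (L - 1) := fun h => hv ⟨L - 1, by omega, h.symm⟩
    obtain ⟨w, hadj, hlt⟩ := (hG v (x (L - 1))).exists_adj_dist_lt hvh
    refine ⟨w, hadj, ?_⟩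
    rw [hf2 v hv]
    by_cases hw : ∃ t < L, x t = w
    · rw [hf_snake w hw]
      exact (firstHit_spec hw).1.trans_le (Nat.le_add_left _ _)
    · rw [hf2 w hw]
      omega

/-- **The snake input has a unique local minimum at the tail.** Given a walk
`x_0, …, x_{L-1}` in a connected graph `G` (each step stalls or moves to a neighbor),
with head `h = x_{L-1}`, define `f v` as the first hitting time of the walk at `v` if
`v` is on the walk, and as `dist(v, h) + L` otherwise. Then `x_0` is a local minimum
of `f`, and every other vertex has a neighbor of strictly smaller `f`-value. -/
theorem stmt_5 {V : Type*} [Fintype V] (G : SimpleGraph V) (hG : G.Connected)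
    (L : ℕ) (hL : 1 ≤ L) (x : ℕ → V)
    (hstep : ∀ t, t + 1 < L → x (t + 1) = x t ∨ G.Adj (x t) (x (t + 1)))
    (f : V → ℕ)
    (hf1 : ∀ v : V, (∃ t < L, x t = v) → f v = sInf {t | t < L ∧ x t = v})
    (hf2 : ∀ v : V, (¬ ∃ t < L, x t = v) → f v = G.dist v (x (L - 1)) + L) :
    (∀ w, G.Adj (x 0) w → f (x 0) ≤ f w) ∧
    (∀ v, v ≠ x 0 → ∃ w, G.Adj v w ∧ f w < f v) :=
  stmt_5_general G hG L hL x hstep f hf1 hf2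
end

section
/- Let V be a finite set, L ≥ 1, and let D be a probability distribution on V^L with p(Z) denoting the probability of the sequence Z. For j ∈ {0,…,L−1} and X, Y ∈ V^L, define q_j(X,Y) = Pr_{Z ~ D}[Z = Y | Z_t = X_t for all t > j] if X and Y agree at every index t > j and the conditioning event has positive probability, and q_j(X,Y) = 0 if X and Y disagree at some index t > j. Then: (a) for all j and all X, Y with p(X) > 0 and p(Y) > 0, p(X)·q_j(X,Y) = p(Y)·q_j(Y,X); and (b) consequently, the function w(X,Y) = (p(X)/L)·∑_{j=0}^{L−1} q_j(X,Y) satisfies w(X,Y) = w(Y,X) for all X, Y with p(X) > 0 and p(Y) > 0. -/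
open scoped Classical

/-- `agreesAfter L j X Y` says the length-`L` sequences `X` and `Y` agree at every
index `t > j`. -/
def agreesAfter {V : Type*} (L : ℕ) (j : ℕ) (X Y : Fin L → V) : Prop :=
  ∀ t : Fin L, j < (t : ℕ) → X t = Y t

/-- `qfun L p j X Y` is the probability that a sequence drawn from the distribution `p`
on `V^L`, conditioned on agreeing with `X` at every index `t > j`, equals `Y`; it is `0`
if `X` and `Y` disagree at some index `t > j`. -/
noncomputable def qfun {V : Type*} [Fintype V] (L : ℕ) (p : (Fin L → V) → ℝ)
    (j : ℕ) (X Y : Fin L → V) : ℝ :=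
  if agreesAfter L j X Y then
    p Y / ∑ Z ∈ Finset.univ.filter (fun Z => agreesAfter L j X Z), p Z
  else 0

/-- **Symmetry of the snake relation function.** For a probability distribution `p` on
`V^L`: (a) `p X · q_j(X,Y) = p Y · q_j(Y,X)` for all `j < L` and all `X, Y` of positive
probability; and (b) consequently `w(X,Y) = (p X / L) · ∑_{j<L} q_j(X,Y)` is symmetric
on sequences of positive probability. -/
theorem stmt_6 {V : Type*} [Fintype V] (L : ℕ) (hL : 1 ≤ L)
    (p : (Fin L → V) → ℝ) (hp : ∀ Z, 0 ≤ p Z) (hpsum : ∑ Z, p Z = 1) :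
    (∀ j < L, ∀ X Y : Fin L → V, 0 < p X → 0 < p Y →
      p X * qfun L p j X Y = p Y * qfun L p j Y X)
    ∧ (∀ X Y : Fin L → V, 0 < p X → 0 < p Y →
      (p X / L) * ∑ j ∈ Finset.range L, qfun L p j X Y
        = (p Y / L) * ∑ j ∈ Finset.range L, qfun L p j Y X) := by

  have key : ∀ (j : ℕ) (X Y : Fin L → V),
      p X * qfun L p j X Y = p Y * qfun L p j Y X := by
    intro j X Y
    by_cases h : agreesAfter L j X Y
    · have hsymm : agreesAfter L j Y X := fun t ht => (h t ht).symm
      have hset : (Finset.univ.filter (fun Z => agreesAfter L j X Z))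
          = Finset.univ.filter (fun Z => agreesAfter L j Y Z) := by
        ext Z
        simp only [Finset.mem_filter, Finset.mem_univ, true_and]
        constructor
        · intro hZ t ht; rw [← h t ht]; exact hZ t ht
        · intro hZ t ht; rw [h t ht]; exact hZ t ht
      simp only [qfun, if_pos h, if_pos hsymm, hset]
      ring
    · have hsymm : ¬ agreesAfter L j Y X := fun hc => h (fun t ht => (hc t ht).symm)
      simp [qfun, if_neg h, if_neg hsymm]
  constructor
  · intro j _ X Y _ _; exact key j X Y
  · intro X Y _ _
    rw [div_mul_eq_mul_div, div_mul_eq_mul_div, Finset.mul_sum, Finset.mul_sum]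
    congr 1
    exact Finset.sum_congr rfl (fun j _ => key j X Y)
end

section
/- Let n ≥ 1, h ∈ {0,1}^n, and let x_0, x_1, … be the coordinate-loop process on {0,1}^n started at h. Fix v ∈ {0,1}^n, i ∈ {0,…,n−1}, and k ∈ {0,…,n}, and let n ≤ t_1 < t_2 < … < t_m be indices with t_r ≡ i (mod n) for every r. Then the m events {Δ(x_{t_r}, v, i) ≤ k}, r = 1,…,m, are mutually independent, and each has probability exactly 2^k/2^n. -/
/-- Flip bit `t mod n` of a vertex of the Boolean hypercube `{0,1}^n`. -/
def flipBitHC {n : ℕ} (x : Fin n → Bool) (t : ℕ) : Fin n → Bool :=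
  fun i => if (i : ℕ) = t % n then !(x i) else x i

/-- The coordinate-loop process on `{0,1}^n` started at `h`, driven by coin flips `b`. -/
def coordLoop {n : ℕ} (h : Fin n → Bool) (b : ℕ → Bool) : ℕ → (Fin n → Bool)
  | 0 => h
  | t + 1 => if b t then flipBitHC (coordLoop h b t) t else coordLoop h b t

/-- Extend a finite string of coin flips to an infinite one (by `false`). -/
def extBits {s : ℕ} (ω : Fin s → Bool) : ℕ → Bool :=
  fun t => if ht : t < s then ω ⟨t, ht⟩ else false

/-- `delta n x v i` is the smallest `k` such that `x` agrees with `v` on every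
coordinate outside `{i, i-1, …, i-k+1}` (indices mod `n`). -/
noncomputable def delta {α : Type*} (n : ℕ) (x v : Fin n → α) (i : ℕ) : ℕ :=
  sInf {k | ∀ j : Fin n, (∀ l < k, (j : ℕ) ≠ (i + n - l) % n) → x j = v j}

/-- Probability of an event on a finite sample space, under the uniform distribution. -/
noncomputable def unifPr {Ω : Type*} [Fintype Ω] (P : Ω → Prop) : ℝ :=
  (Nat.card {ω : Ω // P ω} : ℝ) / (Fintype.card Ω : ℝ)

namespace Stmt8

def toZ : Bool → ZMod 2 := fun b => if b then 1 else 0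

lemma toZ_inj : Function.Injective toZ := by decide

lemma toZ_not (b : Bool) : toZ (!b) = toZ b + 1 := by cases b <;> decide

lemma coordLoop_parity {n : ℕ} (h : Fin n → Bool) (b : ℕ → Bool) (t : ℕ) (j : Fin n) :
    toZ (coordLoop h b t j) =
      toZ (h j) + ∑ u ∈ Finset.range t, (if u % n = (j : ℕ) then toZ (b u) else 0) := by
  induction t with
  | zero => simp [coordLoop]
  | succ t ih =>
    rw [Finset.sum_range_succ, ← add_assoc, ← ih]
    show toZ ((if b t then flipBitHC (coordLoop h b t) t else coordLoop h b t) j) = _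
    by_cases hb : b t
    · rw [if_pos hb]
      show toZ (if (j : ℕ) = t % n then !(coordLoop h b t j) else coordLoop h b t j) = _
      by_cases hj : (j : ℕ) = t % n
      · rw [if_pos hj, if_pos hj.symm, toZ_not, hb]
        rfl
      · rw [if_neg hj, if_neg (fun e => hj e.symm), add_zero]
    · rw [if_neg hb]
      have hbf : b t = false := by revert hb; cases b t <;> simp
      simp [hbf, toZ]

lemma unifPr_congr {Ω : Type*} [Fintype Ω] {P Q : Ω → Prop} (h : ∀ ω, P ω ↔ Q ω) :
    unifPr P = unifPr Q := by
  unfold unifPr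
  rw [Nat.card_congr (Equiv.subtypeEquivRight h)]

lemma delta_le_iff {n : ℕ} (hn : 0 < n) (x v : Fin n → Bool) (i k : ℕ) (hi : i < n) :
    delta n x v i ≤ k ↔ ∀ j : Fin n, (∀ l < k, (j : ℕ) ≠ (i + n - l) % n) → x j = v j := by
  have hne : {k | ∀ j : Fin n, (∀ l < k, (j : ℕ) ≠ (i + n - l) % n) → x j = v j}.Nonempty := by
    refine ⟨n, fun j hj => ?_⟩
    exfalso
    by_cases hji : (j : ℕ) ≤ i
    · refine hj (i - (j : ℕ)) (by omega) ?_
      -- i < n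
      have h1 : i + n - (i - (j : ℕ)) = n + (j : ℕ) := by omega
      rw [h1, Nat.add_mod_left, Nat.mod_eq_of_lt j.2]
    · refine hj (i + n - (j : ℕ)) (by have := j.2; omega) ?_
      have h1 : i + n - (i + n - (j : ℕ)) = (j : ℕ) := by have := j.2; omega
      rw [h1, Nat.mod_eq_of_lt j.2]
  constructor
  · intro hle j hj
    have hmem := Nat.sInf_mem hne
    exact hmem j (fun l hl => hj l (lt_of_lt_of_le hl hle))
  · intro hk
    exact Nat.sInf_le hk


lemma card_subtype_imp_eq {c : Bool} {C : Prop} [Decidable C] :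
    Nat.card {b : Bool // C → b = c} = if C then 1 else 2 := by
  by_cases hC : C
  · rw [if_pos hC]
    rw [Nat.card_congr (Equiv.subtypeEquivRight (q := fun b => b = c)
      (fun b => imp_iff_right hC))]
    rw [Nat.card_eq_fintype_card, Fintype.card_subtype_eq]
  · rw [if_neg hC]
    rw [Nat.card_congr (Equiv.subtypeUnivEquiv (fun b hc => absurd hc hC))]
    simp

lemma window_inj {n i : ℕ} (hn : 0 < n) {l l' : ℕ} (hl : l < n) (hl' : l' < n)
    (he : (i + n - l) % n = (i + n - l') % n) : l = l' := by
  rcases le_total l l' with hle | hle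
  · have h1 : i + n - l' ≤ i + n - l := by omega
    have h2 : n ∣ (i + n - l) - (i + n - l') := (Nat.modEq_iff_dvd' h1).mp he.symm
    have h3 : (i + n - l) - (i + n - l') = l' - l := by omega
    rw [h3] at h2
    have := Nat.eq_zero_of_dvd_of_lt h2
    omega
  · have h1 : i + n - l ≤ i + n - l' := by omega
    have h2 : n ∣ (i + n - l') - (i + n - l) := (Nat.modEq_iff_dvd' h1).mp he
    have h3 : (i + n - l') - (i + n - l) = l - l' := by omega
    rw [h3] at h2
    have := Nat.eq_zero_of_dvd_of_lt h2
    omega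

lemma card_window {n i k : ℕ} (hn : 0 < n) (hk : k ≤ n) :
    (Finset.univ.filter
      (fun j : Fin n => ¬ (∀ l < k, (j : ℕ) ≠ (i + n - l) % n))).card = k := by
  have himg : Finset.univ.filter
      (fun j : Fin n => ¬ (∀ l < k, (j : ℕ) ≠ (i + n - l) % n))
      = (Finset.range k).image (fun l => (⟨(i + n - l) % n, Nat.mod_lt _ hn⟩ : Fin n)) := by
    ext j
    simp only [Finset.mem_filter, Finset.mem_univ, true_and, Finset.mem_image,
      Finset.mem_range, not_forall, Classical.not_imp, not_not, ne_eq]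
    constructor
    · rintro ⟨l, hl, hne⟩
      refine ⟨l, hl, ?_⟩
      apply Fin.ext
      simpa using hne.symm
    · rintro ⟨l, hl, he⟩
      refine ⟨l, hl, ?_⟩
      rw [← he]
  rw [himg, Finset.card_image_of_injOn, Finset.card_range]
  intro l hl l' hl' he
  have hl2 : l < k := by simpa using hl
  have hl2' : l' < k := by simpa using hl'
  have hv := congrArg Fin.val he
  exact window_inj hn (lt_of_lt_of_le hl2 hk) (lt_of_lt_of_le hl2' hk) hv

lemma card_delta_le {n : ℕ} (hn : 0 < n) (v : Fin n → Bool) (i k : ℕ) (hi : i < n)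
    (hk : k ≤ n) :
    Nat.card {x : Fin n → Bool // delta n x v i ≤ k} = 2 ^ k := by
  classical
  have h1 : Nat.card {x : Fin n → Bool // delta n x v i ≤ k}
      = Nat.card {x : Fin n → Bool //
          ∀ j : Fin n, (∀ l < k, (j : ℕ) ≠ (i + n - l) % n) → x j = v j} :=
    Nat.card_congr (Equiv.subtypeEquivRight (fun x => delta_le_iff hn x v i k hi))
  rw [h1, Nat.card_congr (Equiv.subtypePiEquivPi
    (p := fun (j : Fin n) (b : Bool) => (∀ l < k, (j : ℕ) ≠ (i + n - l) % n) → b = v j)),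
    Nat.card_pi]
  have h2 : ∀ j : Fin n,
      Nat.card {b : Bool // (∀ l < k, (j : ℕ) ≠ (i + n - l) % n) → b = v j}
        = if (∀ l < k, (j : ℕ) ≠ (i + n - l) % n) then 1 else 2 := fun j =>
    card_subtype_imp_eq
  rw [Finset.prod_congr rfl (fun j _ => h2 j), Finset.prod_ite, Finset.prod_const_one,
    Finset.prod_const, one_mul, card_window hn hk]


def inWin (n : ℕ) {m : ℕ} (t : Fin m → ℕ) (u : ℕ) : Prop :=
  ∃ r : Fin m, t r - n ≤ u ∧ u < t r

instance (n : ℕ) {m : ℕ} (t : Fin m → ℕ) : DecidablePred (inWin n t) := fun u => by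
  unfold inWin; infer_instance

/-- The map recording the process values at the times `t r` together with the
coins outside the designated windows. -/
def Phi {n m s : ℕ} (h : Fin n → Bool) (t : Fin m → ℕ) (ω : Fin s → Bool) :
    (Fin m → Fin n → Bool) × ({u : Fin s // ¬ inWin n t (u : ℕ)} → Bool) :=
  (fun r => coordLoop h (extBits ω) (t r), fun u => ω u.1)

lemma Phi_injective {n m s : ℕ} (hn : 0 < n) (h : Fin n → Bool) (t : Fin m → ℕ)
    (hge : ∀ r, n ≤ t r) (hts : ∀ r, t r ≤ s) :
    Function.Injective (Phi (s := s) h t) := by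
  intro ω ω' hPhi
  have h1 : ∀ r, coordLoop h (extBits ω) (t r) = coordLoop h (extBits ω') (t r) :=
    fun r => congrFun (congrArg Prod.fst hPhi) r
  have h2 : ∀ u : Fin s, ¬ inWin n t (u : ℕ) → ω u = ω' u := fun u hu =>
    congrFun (congrArg Prod.snd hPhi) ⟨u, hu⟩
  have key : ∀ N, ∀ u : Fin s, (u : ℕ) < N → ω u = ω' u := by
    intro N
    induction N with
    | zero => intro u hu; omega
    | succ N ih =>
      intro u hu
      rcases Nat.lt_succ_iff_lt_or_eq.mp hu with h' | h'
      · exact ih u h'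
      · by_cases hDu : inWin n t (u : ℕ)
        · obtain ⟨r, hr1, hr2⟩ := hDu
          set j : Fin n := ⟨(u : ℕ) % n, Nat.mod_lt _ hn⟩ with hjdef
          have e1 := coordLoop_parity h (extBits ω) (t r) j
          have e2 := coordLoop_parity h (extBits ω') (t r) j
          rw [h1 r] at e1
          have hsum := add_left_cancel (e1.symm.trans e2)
          rw [Finset.range_eq_Ico,
            ← Finset.sum_Ico_consecutive _ (Nat.zero_le (u : ℕ)) (le_of_lt hr2),
            ← Finset.sum_Ico_consecutive _ (Nat.zero_le (u : ℕ)) (le_of_lt hr2)] at hsum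
          have hlow : ∑ u' ∈ Finset.Ico 0 (u : ℕ),
                (if u' % n = (j : ℕ) then toZ (extBits ω u') else 0)
              = ∑ u' ∈ Finset.Ico 0 (u : ℕ),
                (if u' % n = (j : ℕ) then toZ (extBits ω' u') else 0) := by
            refine Finset.sum_congr rfl (fun u' hu' => ?_)
            have hu'u : u' < (u : ℕ) := (Finset.mem_Ico.mp hu').2
            by_cases hlt : u' < s
            · have heq : ω ⟨u', hlt⟩ = ω' ⟨u', hlt⟩ := ih ⟨u', hlt⟩ (show u' < N by omega)
              simp [extBits, hlt, heq]
            · simp [extBits, hlt]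
          have hhigh : ∀ ρ : Fin s → Bool,
              ∑ u' ∈ Finset.Ico (u : ℕ) (t r),
                (if u' % n = (j : ℕ) then toZ (extBits ρ u') else 0) = toZ (ρ u) := by
            intro ρ
            rw [Finset.sum_eq_single_of_mem (u : ℕ)
              (Finset.mem_Ico.mpr ⟨le_refl _, hr2⟩)]
            · rw [if_pos rfl]
              unfold extBits
              rw [dif_pos u.2]
            · intro u' hu' hne
              rw [if_neg]
              intro hmod
              have h3 : (u : ℕ) ≤ u' := (Finset.mem_Ico.mp hu').1
              have h4 : u' < t r := (Finset.mem_Ico.mp hu').2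
              have h5 : n ∣ u' - (u : ℕ) := (Nat.modEq_iff_dvd' h3).mp hmod.symm
              have h6 : n ≤ u' - (u : ℕ) := Nat.le_of_dvd (by omega) h5
              have := hge r
              omega
          rw [hlow, hhigh, hhigh] at hsum
          exact toZ_inj (add_left_cancel hsum)
        · exact h2 u hDu
  funext u
  exact key ((u : ℕ) + 1) u (Nat.lt_succ_self _)


lemma card_inWin {n m s : ℕ} (hn : 0 < n) (t : Fin m → ℕ)
    (hge : ∀ r, n ≤ t r) (hts : ∀ r, t r ≤ s)
    (hstep : ∀ r r' : Fin m, r < r' → t r + n ≤ t r') :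
    Nat.card {u : Fin s // inWin n t (u : ℕ)} = m * n := by
  have hlt : ∀ p : Fin m × Fin n, t p.1 - n + (p.2 : ℕ) < s := fun p => by
    have := hge p.1; have := hts p.1; have := p.2.2; omega
  have hwin : ∀ p : Fin m × Fin n, inWin n t (t p.1 - n + (p.2 : ℕ)) := fun p =>
    ⟨p.1, by have := hge p.1; have := p.2.2; omega, by have := hge p.1; have := p.2.2; omega⟩
  have hbij : Function.Bijective (fun p : Fin m × Fin n =>
      (⟨⟨t p.1 - n + (p.2 : ℕ), hlt p⟩, hwin p⟩ : {u : Fin s // inWin n t (u : ℕ)})) := by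
    constructor
    · rintro ⟨r, a⟩ ⟨r', a'⟩ hpe
      have hv : t r - n + (a : ℕ) = t r' - n + (a' : ℕ) :=
        congrArg (fun z : {u : Fin s // inWin n t (u : ℕ)} => ((z : Fin s) : ℕ)) hpe
      have hrr : r = r' := by
        rcases lt_trichotomy r r' with hlt' | heq | hgt
        · have := hstep r r' hlt'
          have := hge r; have := hge r'; have := a.2; have := a'.2
          exfalso; omega
        · exact heq
        · have := hstep r' r hgt
          have := hge r; have := hge r'; have := a.2; have := a'.2
          exfalso; omega
      subst hrr
      have ha : a = a' := by
        apply Fin.ext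
        have := hge r
        omega
      rw [ha]
    · rintro ⟨⟨u, hu⟩, r, hw1, hw2⟩
      have hw1' : t r - n ≤ u := hw1
      have hw2' : u < t r := hw2
      have := hge r
      refine ⟨(r, ⟨u - (t r - n), by omega⟩), ?_⟩
      apply Subtype.ext
      apply Fin.ext
      show t r - n + (u - (t r - n)) = u
      omega
  rw [← Nat.card_congr (Equiv.ofBijective _ hbij)]
  simp [Nat.card_eq_fintype_card]

lemma master {n m s : ℕ} (hn : 0 < n) (h : Fin n → Bool) (t : Fin m → ℕ)
    (hge : ∀ r, n ≤ t r) (hts : ∀ r, t r ≤ s)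
    (hstep : ∀ r r' : Fin m, r < r' → t r + n ≤ t r')
    (P : Fin m → (Fin n → Bool) → Prop) :
    unifPr (fun ω : Fin s → Bool => ∀ r, P r (coordLoop h (extBits ω) (t r)))
      = (∏ r, (Nat.card {x : Fin n → Bool // P r x} : ℝ)) / ((2 : ℝ) ^ n) ^ m := by
  classical
  have hd : Nat.card {u : Fin s // inWin n t (u : ℕ)} = m * n :=
    card_inWin hn t hge hts hstep
  have hsplit : Nat.card {u : Fin s // inWin n t (u : ℕ)}
      + Nat.card {u : Fin s // ¬ inWin n t (u : ℕ)} = s := by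
    rw [← Nat.card_sum, Nat.card_congr (Equiv.sumCompl _)]
    simp
  have hc : Nat.card {u : Fin s // ¬ inWin n t (u : ℕ)} = s - m * n := by omega
  have hmn : m * n ≤ s := by omega
  -- bijectivity of Phi
  have hcard : Fintype.card (Fin s → Bool)
      = Fintype.card ((Fin m → Fin n → Bool) × ({u : Fin s // ¬ inWin n t (u : ℕ)} → Bool)) := by
    rw [← Nat.card_eq_fintype_card, ← Nat.card_eq_fintype_card, Nat.card_prod,
      Nat.card_fun, Nat.card_fun, Nat.card_fun, Nat.card_fun, hc]
    simp only [Nat.card_eq_fintype_card, Fintype.card_bool, Fintype.card_fin]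
    rw [← pow_mul, ← pow_add]
    congr 1
    rw [mul_comm n m]
    omega
  have hbij : Function.Bijective (Phi (s := s) h t) :=
    (Fintype.bijective_iff_injective_and_card _).mpr
      ⟨Phi_injective hn h t hge hts, hcard⟩
  set E := Equiv.ofBijective _ hbij with hE
  have hcount : Nat.card {ω : Fin s → Bool // ∀ r, P r (coordLoop h (extBits ω) (t r))}
      = (∏ r, Nat.card {x : Fin n → Bool // P r x}) * 2 ^ (s - m * n) := by
    have e1 : {ω : Fin s → Bool // ∀ r, P r (coordLoop h (extBits ω) (t r))}
        ≃ {p : (Fin m → Fin n → Bool) × ({u : Fin s // ¬ inWin n t (u : ℕ)} → Bool) //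
            ∀ r, P r (p.1 r)} :=
      E.subtypeEquiv (fun ω => Iff.rfl)
    have e2 : {p : (Fin m → Fin n → Bool) × ({u : Fin s // ¬ inWin n t (u : ℕ)} → Bool) //
            ∀ r, P r (p.1 r)}
        ≃ {y : Fin m → Fin n → Bool // ∀ r, P r (y r)}
          × ({u : Fin s // ¬ inWin n t (u : ℕ)} → Bool) :=
      { toFun := fun p => (⟨p.1.1, p.2⟩, p.1.2)
        invFun := fun x => ⟨(x.1.1, x.2), x.1.2⟩
        left_inv := fun p => rfl
        right_inv := fun x => rfl }
    rw [Nat.card_congr (e1.trans e2), Nat.card_prod,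
      Nat.card_congr (Equiv.subtypePiEquivPi
        (p := fun (r : Fin m) (x : Fin n → Bool) => P r x)), Nat.card_pi]
    congr 1
    rw [Nat.card_eq_fintype_card, Fintype.card_fun, Fintype.card_bool,
      ← Nat.card_eq_fintype_card (α := {u : Fin s // ¬ inWin n t (u : ℕ)}), hc]
  unfold unifPr
  rw [hcount, Fintype.card_fun, Fintype.card_bool, Fintype.card_fin]
  have h2s : ((2 : ℝ)) ^ s = ((2 : ℝ) ^ n) ^ m * 2 ^ (s - m * n) := by
    rw [← pow_mul, ← pow_add]
    congr 1
    rw [mul_comm n m]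
    omega
  push_cast
  rw [h2s]
  have hpos1 : ((2 : ℝ) ^ n) ^ m ≠ 0 := by positivity
  have hpos2 : ((2 : ℝ)) ^ (s - m * n) ≠ 0 := by positivity
  field_simp


lemma card_imp_eq' {n : ℕ} (hn : 0 < n) (v : Fin n → Bool) (i k : ℕ) (hi : i < n)
    (hk : k ≤ n) (C : Prop) [Decidable C] :
    Nat.card {x : Fin n → Bool // C → delta n x v i ≤ k}
      = if C then 2 ^ k else 2 ^ n := by
  by_cases hC : C
  · rw [if_pos hC,
      Nat.card_congr (Equiv.subtypeEquivRight
        (q := fun x : Fin n → Bool => delta n x v i ≤ k) (fun x => imp_iff_right hC))]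
    exact card_delta_le hn v i k hi hk
  · rw [if_neg hC,
      Nat.card_congr (Equiv.subtypeUnivEquiv (fun x hx => absurd hx hC))]
    simp [Nat.card_eq_fintype_card]

end Stmt8

/-- **Independence of the sparseness events.** Let `x` be the coordinate-loop process
on `{0,1}^n` started at `h`. Fix `v`, `i < n`, `k ≤ n`, and indices
`n ≤ t 1 < … < t m` all congruent to `i` mod `n`. Then each event
`Δ(x (t r), v, i) ≤ k` has probability exactly `2^k / 2^n`, and the events are
mutually independent. -/
theorem stmt_8 (n : ℕ) (hn : 1 ≤ n) (h v : Fin n → Bool)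
    (i k : ℕ) (hi : i < n) (hk : k ≤ n) (m : ℕ) (hm : 1 ≤ m)
    (t : Fin m → ℕ) (hmono : StrictMono t) (hge : ∀ r, n ≤ t r)
    (hcong : ∀ r, t r % n = i)
    (s : ℕ) (hts : ∀ r, t r ≤ s) :
    (∀ r : Fin m,
      unifPr (fun ω : Fin s → Bool => delta n (coordLoop h (extBits ω) (t r)) v i ≤ k)
        = 2 ^ k / 2 ^ n)
    ∧ (∀ S : Finset (Fin m),
      unifPr (fun ω : Fin s → Bool =>
          ∀ r ∈ S, delta n (coordLoop h (extBits ω) (t r)) v i ≤ k)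
        = ∏ r ∈ S,
            unifPr (fun ω : Fin s → Bool =>
              delta n (coordLoop h (extBits ω) (t r)) v i ≤ k)) := by
  classical
  have hn0 : 0 < n := hn
  have hstep : ∀ r r' : Fin m, r < r' → t r + n ≤ t r' := by
    intro r r' hlt
    have h1 : t r < t r' := hmono hlt
    have h2 : t r % n = t r' % n := (hcong r).trans (hcong r').symm
    have h3 : n ∣ t r' - t r := (Nat.modEq_iff_dvd' (le_of_lt h1)).mp h2
    have h4 : n ≤ t r' - t r := Nat.le_of_dvd (by omega) h3
    omega
  have part1 : ∀ r : Fin m,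
      unifPr (fun ω : Fin s → Bool => delta n (coordLoop h (extBits ω) (t r)) v i ≤ k)
        = 2 ^ k / 2 ^ n := by
    intro r
    have hmas := Stmt8.master hn0 h t hge hts hstep
      (fun r' x => r' = r → delta n x v i ≤ k)
    beta_reduce at hmas
    rw [Stmt8.unifPr_congr
      (Q := fun ω : Fin s → Bool =>
        ∀ r' : Fin m, r' = r → delta n (coordLoop h (extBits ω) (t r')) v i ≤ k)
      (fun ω => ⟨fun hd r' hr' => hr' ▸ hd, fun hall => hall r rfl⟩), hmas]
    have hcards : ∀ r' : Fin m,
        (Nat.card {x : Fin n → Bool // r' = r → delta n x v i ≤ k} : ℝ)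
          = if r' = r then (2 : ℝ) ^ k else (2 : ℝ) ^ n := by
      intro r'
      rw [Stmt8.card_imp_eq' hn0 v i k hi hk (r' = r)]
      split_ifs <;> push_cast <;> ring
    rw [Finset.prod_congr rfl (fun r' _ => hcards r')]
    rw [show ((2 : ℝ) ^ n) ^ m = ∏ _r' : Fin m, (2 : ℝ) ^ n by
      rw [Finset.prod_const, Finset.card_univ, Fintype.card_fin]]
    rw [← Finset.prod_div_distrib]
    have hrat : ∀ r' : Fin m,
        ((if r' = r then (2 : ℝ) ^ k else (2 : ℝ) ^ n) / (2 : ℝ) ^ n)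
          = if r' = r then (2 : ℝ) ^ k / (2 : ℝ) ^ n else 1 := by
      intro r'
      split_ifs with he
      · rfl
      · exact div_self (by positivity)
    rw [Finset.prod_congr rfl (fun r' _ => hrat r'),
      Finset.prod_ite_eq' Finset.univ r (fun _ => (2 : ℝ) ^ k / (2 : ℝ) ^ n),
      if_pos (Finset.mem_univ r)]
  refine ⟨part1, ?_⟩
  intro S
  have hmas := Stmt8.master hn0 h t hge hts hstep
    (fun r x => r ∈ S → delta n x v i ≤ k)
  beta_reduce at hmas
  rw [hmas]
  have hcards : ∀ r : Fin m,
      (Nat.card {x : Fin n → Bool // r ∈ S → delta n x v i ≤ k} : ℝ)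
        = if r ∈ S then (2 : ℝ) ^ k else (2 : ℝ) ^ n := by
    intro r
    rw [Stmt8.card_imp_eq' hn0 v i k hi hk (r ∈ S)]
    split_ifs <;> push_cast <;> ring
  rw [Finset.prod_congr rfl (fun r _ => hcards r)]
  rw [show ((2 : ℝ) ^ n) ^ m = ∏ _r : Fin m, (2 : ℝ) ^ n by
    rw [Finset.prod_const, Finset.card_univ, Fintype.card_fin]]
  rw [← Finset.prod_div_distrib]
  have hrat : ∀ r : Fin m,
      ((if r ∈ S then (2 : ℝ) ^ k else (2 : ℝ) ^ n) / (2 : ℝ) ^ n)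
        = if r ∈ S then (2 : ℝ) ^ k / (2 : ℝ) ^ n else 1 := by
    intro r
    split_ifs with he
    · rfl
    · exact div_self (by positivity)
  rw [Finset.prod_congr rfl (fun r _ => hrat r), Finset.prod_ite_mem, Finset.univ_inter]
  exact (Finset.prod_congr rfl (fun r hr => (part1 r).symm))
end

section
/- There is a universal constant c > 0 such that for all sufficiently large n and every h ∈ {0,1}^n, with L = ⌊2^{n/2}/100⌋, a snake X drawn from the snake distribution D_{h,L} on {0,1}^n is c-sparse with probability at least 1 − n²·2^{−n}. -/
/-- A snake `x_0, …, x_{L-1}` in `{0,1}^n` is `c`-sparse if for every vertex `v` and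
every `k ≤ n`, `|{t < L : Δ(x_t, v, t mod n) = k}| ≤ c·n·(n + L/2^{n-k})`. -/
noncomputable def IsSparse (c : ℝ) (n L : ℕ) (x : ℕ → Fin n → Bool) : Prop :=
  ∀ v : Fin n → Bool, ∀ k ≤ n,
    (((Finset.range L).filter (fun t => delta n (x t) v (t % n) = k)).card : ℝ)
      ≤ c * n * (n + (L : ℝ) / 2 ^ (n - k))

/-!
If a snake is not `3`-sparse at `(v, k)`, then, discarding the first `n` steps and sorting the
remaining times by their residue `r` mod `n`, some class contains `m = n + ⌊L/2^(n-k)⌋ + 1` times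
`t` at which `x_t` agrees with `v` on the `n - k` coordinates outside the window of length `k`
ending at `r`. For a fixed set `S` of such times, agreement at `(t, j)` determines the coin tossed
at the last visit of coordinate `j` before `t` from the earlier coins; these last visits are
distinct for distinct `(t, j)`, so the events for `S` have probability at most `2^(-|S|(n-k))`.
A union bound over the `C(M, m) ≤ (3M/m)^m` choices of `S` (with `M ≤ L/n`) and over `v, k, r`
bounds the failure probability by `n²·2^(-n)` once `n ≥ 12`.
-/

open Finset

section CoordLoop

variable {n : ℕ} (h : Fin n → Bool)

theorem coordLoop_congr {b b' : ℕ → Bool} {t : ℕ} (hb : ∀ s < t, b s = b' s) :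
    coordLoop h b t = coordLoop h b' t := by
  induction t with
  | zero => rfl
  | succ t ih =>
    simp only [coordLoop, hb t t.lt_succ_self, ih fun s hs => hb s (hs.trans t.lt_succ_self)]

theorem coordLoop_succ_apply_of_ne (b : ℕ → Bool) {t : ℕ} {j : Fin n} (hj : t % n ≠ j) :
    coordLoop h b (t + 1) j = coordLoop h b t j := by
  by_cases hb : b t <;> simp [coordLoop, flipBitHC, hb, Ne.symm hj]

theorem coordLoop_succ_apply_self (b : ℕ → Bool) {t : ℕ} {j : Fin n} (hj : t % n = j) :
    coordLoop h b (t + 1) j = xor (b t) (coordLoop h b t j) := by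
  by_cases hb : b t <;> simp [coordLoop, flipBitHC, hb, hj]

theorem coordLoop_apply_eq_of_forall_mod_ne (b : ℕ → Bool) {p t : ℕ} {j : Fin n} (hpt : p ≤ t)
    (hj : ∀ s, p ≤ s → s < t → s % n ≠ j) : coordLoop h b t j = coordLoop h b p j := by
  induction t, hpt using Nat.le_induction with
  | base => rfl
  | succ t hpt ih =>
    rw [coordLoop_succ_apply_of_ne h b (hj t hpt t.lt_succ_self),
      ih fun s hps hst => hj s hps (hst.trans t.lt_succ_self)]

end CoordLoop

theorem Nat.eq_of_mod_eq_of_lt_add {a b n : ℕ} (h : a % n = b % n) (hab : a < b + n)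
    (hba : b < a + n) : a = b :=
  Nat.ModEq.eq_of_abs_lt h (abs_sub_lt_iff.2 ⟨by omega, by omega⟩)

-- For `n ≤ t`, the unique `s ∈ [t - n, t)` with `s ≡ j [MOD n]`.
def lastVisit (n t j : ℕ) : ℕ := t - n + (j + n - t % n) % n

section LastVisit

variable {n t j : ℕ}

theorem sub_le_lastVisit : t - n ≤ lastVisit n t j := Nat.le_add_right _ _

theorem lastVisit_lt (hn : 0 < n) (ht : n ≤ t) : lastVisit n t j < t := by
  have := Nat.mod_lt (j + n - t % n) hn
  unfold lastVisit; omega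

theorem lastVisit_mod (hn : 0 < n) (ht : n ≤ t) (hj : j < n) : lastVisit n t j % n = j := by
  have := Nat.mod_lt t hn
  unfold lastVisit
  rw [Nat.add_mod, ← Nat.mod_eq_sub_mod ht, Nat.mod_mod, Nat.add_mod_mod,
    show t % n + (j + n - t % n) = j + n by omega, Nat.add_mod_right, Nat.mod_eq_of_lt hj]

theorem mod_ne_of_lastVisit_lt (hn : 0 < n) (ht : n ≤ t) (hj : j < n) {s : ℕ}
    (hs : lastVisit n t j < s) (hst : s < t) : s % n ≠ j := by
  intro hsj
  have := Nat.eq_of_mod_eq_of_lt_add (hsj.trans (lastVisit_mod hn ht hj).symm)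
    (by have := sub_le_lastVisit (n := n) (t := t) (j := j); omega) (by omega)
  omega

end LastVisit

theorem coin_lastVisit_eq_of_coordLoop_eq {n : ℕ} (h : Fin n → Bool) {b b' : ℕ → Bool} {t : ℕ}
    {j : Fin n} (ht : n ≤ t) (hb : ∀ s < lastVisit n t j, b s = b' s)
    (heq : coordLoop h b t j = coordLoop h b' t j) :
    b (lastVisit n t j) = b' (lastVisit n t j) := by
  have hn : 0 < n := j.pos
  set p := lastVisit n t j
  have hp : p % n = j := lastVisit_mod hn ht j.isLt
  have hstable : ∀ c : ℕ → Bool, coordLoop h c t j = xor (c p) (coordLoop h c p j) := fun c => by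
    rw [coordLoop_apply_eq_of_forall_mod_ne h c (lastVisit_lt hn ht)
      fun s hps hst => mod_ne_of_lastVisit_lt hn ht j.isLt hps hst,
      coordLoop_succ_apply_self h c hp]
  rw [hstable, hstable, coordLoop_congr h hb] at heq
  exact Bool.xor_left_inj.mp heq

def pivots (n : ℕ) (S : Finset ℕ) (W : Finset (Fin n)) : Finset ℕ :=
  (S ×ˢ W).image fun q => lastVisit n q.1 q.2

section Pivots

variable {n r : ℕ} {S : Finset ℕ} {W : Finset (Fin n)}

theorem lt_of_mem_pivots (hS : ∀ t ∈ S, n ≤ t) {p : ℕ} (hp : p ∈ pivots n S W) :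
    ∃ t ∈ S, p < t := by
  obtain ⟨⟨t, j⟩, htj, rfl⟩ := mem_image.1 hp
  exact ⟨t, (mem_product.1 htj).1, lastVisit_lt j.pos (hS t (mem_product.1 htj).1)⟩

theorem card_pivots (hS : ∀ t ∈ S, n ≤ t ∧ t % n = r) : (pivots n S W).card = S.card * W.card := by
  rw [pivots, card_image_of_injOn, card_product]
  rintro ⟨t, j⟩ htj ⟨t', j'⟩ htj' hp
  simp only [coe_product, Set.mem_prod, mem_coe] at htj htj' hp
  obtain ⟨ht, htr⟩ := hS t htj.1
  obtain ⟨ht', ht'r⟩ := hS t' htj'.1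
  have hn := j.pos
  have hj : j = j' := Fin.ext <| by
    rw [← lastVisit_mod hn ht j.isLt, ← lastVisit_mod hn ht' j'.isLt, hp]
  have h1 := lastVisit_lt (j := j) hn ht
  have h2 := lastVisit_lt (j := j') hn ht'
  have h3 := sub_le_lastVisit (n := n) (t := t) (j := j)
  have h4 := sub_le_lastVisit (n := n) (t := t') (j := j')
  rw [Prod.mk.injEq, Nat.eq_of_mod_eq_of_lt_add (htr.trans ht'r.symm) (by omega) (by omega)]
  exact ⟨rfl, hj⟩

theorem eq_of_forall_coordLoop_eq_of_eqOn_pivots (h : Fin n → Bool) (hS : ∀ t ∈ S, n ≤ t)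
    {b b' : ℕ → Bool} (hev : ∀ t ∈ S, ∀ j ∈ W, coordLoop h b t j = coordLoop h b' t j)
    (hoff : ∀ s ∉ pivots n S W, b s = b' s) : b = b' := by
  funext p
  induction p using Nat.strong_induction_on with
  | _ p ih =>
    by_cases hp : p ∈ pivots n S W
    · obtain ⟨⟨t, j⟩, htj, rfl⟩ := mem_image.1 hp
      obtain ⟨ht, hj⟩ := mem_product.1 htj
      exact coin_lastVisit_eq_of_coordLoop_eq h (hS t ht) ih (hev t ht j hj)
    · exact hoff p hp

end Pivots

theorem card_mul_pow_le_of_injOn_restrict {α β : Type*} [Fintype α] [DecidableEq α] [Fintype β]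
    (T : Finset (α → β)) (P : Finset α)
    (hT : ∀ ω ∈ T, ∀ ω' ∈ T, (∀ a ∉ P, ω a = ω' a) → ω = ω') :
    T.card * Fintype.card β ^ P.card ≤ Fintype.card β ^ Fintype.card α := by
  let glue : T × (P → β) → α → β := fun z a => if ha : a ∈ P then z.2 ⟨a, ha⟩ else z.1.1 a
  have hglue : Function.Injective glue := by
    rintro ⟨⟨ω, hω⟩, g⟩ ⟨⟨ω', hω'⟩, g'⟩ hz
    have hg : g = g' := funext fun a => by simpa [glue, a.2] using congrFun hz a
    have hω : ω = ω' := hT ω hω ω' hω' fun a ha => by simpa [glue, ha] using congrFun hz a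
    subst hω hg
    rfl
  simpa [Fintype.card_prod, Fintype.card_fun] using Fintype.card_le_of_injective glue hglue

theorem extBits_injective {L : ℕ} : Function.Injective (extBits (s := L)) := fun ω ω' hω =>
  funext fun s => by simpa [extBits] using congrFun hω s

theorem card_filter_forall_coordLoop_eq_mul_le {n L r : ℕ} (h v : Fin n → Bool)
    (S : Finset ℕ) (W : Finset (Fin n)) (hS : ∀ t ∈ S, n ≤ t ∧ t < L ∧ t % n = r) :
    (univ.filter fun ω : Fin L → Bool =>
        ∀ t ∈ S, ∀ j ∈ W, coordLoop h (extBits ω) t j = v j).card * 2 ^ (S.card * W.card)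
      ≤ 2 ^ L := by
  have hP : ∀ p ∈ pivots n S W, p < L := fun p hp => by
    obtain ⟨t, ht, hpt⟩ := lt_of_mem_pivots (fun t ht => (hS t ht).1) hp
    exact hpt.trans (hS t ht).2.1
  have hcard := card_pivots (W := W) fun t ht => ⟨(hS t ht).1, (hS t ht).2.2⟩
  have := card_mul_pow_le_of_injOn_restrict (univ.filter fun ω : Fin L → Bool =>
      ∀ t ∈ S, ∀ j ∈ W, coordLoop h (extBits ω) t j = v j) ((pivots n S W).attachFin hP) ?_
  · simpa [card_attachFin, hcard] using this
  intro ω hω ω' hω' hoff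
  simp only [mem_filter, mem_univ, true_and] at hω hω'
  refine extBits_injective <| eq_of_forall_coordLoop_eq_of_eqOn_pivots h
    (fun t ht => (hS t ht).1) (fun t ht j hj => (hω t ht j hj).trans (hω' t ht j hj).symm) ?_
  intro s hs
  by_cases hsL : s < L
  · simpa [extBits, hsL] using hoff ⟨s, hsL⟩ (by simpa [mem_attachFin] using hs)
  · simp [extBits, hsL]

def outsideWindow (n r k : ℕ) : Finset (Fin n) :=
  univ.filter fun j => ∀ l < k, (j : ℕ) ≠ (r + n - l) % n

theorem sub_le_card_outsideWindow (n r k : ℕ) : n - k ≤ (outsideWindow n r k).card := by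
  have hcompl : (outsideWindow n r k)ᶜ.card ≤ k := by
    rw [← card_map Fin.valEmbedding]
    refine (card_le_card fun i hi => ?_).trans ((card_image_le (s := range k)
      (f := fun l => (r + n - l) % n)).trans (card_range k).le)
    obtain ⟨j, hj, rfl⟩ := mem_map.1 hi
    simp only [outsideWindow, mem_compl, mem_filter, mem_univ, true_and, not_forall,
      not_not] at hj
    obtain ⟨l, hl, hjl⟩ := hj
    exact mem_image.2 ⟨l, mem_range.2 hl, hjl.symm⟩
  have := card_compl (outsideWindow n r k)
  simp only [Fintype.card_fin] at this
  omega

theorem eq_of_delta_le {α : Type*} {n : ℕ} {x v : Fin n → α} {i k : ℕ} (hk : delta n x v i ≤ k)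
    {j : Fin n} (hj : j ∈ outsideWindow n i k) : x j = v j := by
  have hn : n ∈ {k | ∀ j : Fin n, (∀ l < k, (j : ℕ) ≠ (i + n - l) % n) → x j = v j} := by
    refine fun j hj => absurd ?_ (hj ((i + n - j) % n) (Nat.mod_lt _ j.pos))
    have := Nat.div_add_mod (i + n - j) n
    rw [show i + n - (i + n - j) % n = j + n * ((i + n - j) / n) by omega,
      Nat.add_mul_mod_self_left, Nat.mod_eq_of_lt j.isLt]
  exact Nat.sInf_mem ⟨n, hn⟩ j fun l hl => (mem_filter.1 hj).2 l (hl.trans_le hk)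

def residueTimes (n L r : ℕ) : Finset ℕ := (range L).filter fun t => n ≤ t ∧ t % n = r

theorem card_residueTimes_le {n : ℕ} (hn : 0 < n) (L r : ℕ) :
    (residueTimes n L r).card ≤ L / n := by
  have hmaps : ∀ t ∈ residueTimes n L r, t / n ∈ Icc 1 (L / n) := fun t ht => by
    simp only [residueTimes, mem_filter, mem_range] at ht
    exact mem_Icc.2 ⟨(Nat.one_le_div_iff hn).2 ht.2.1, Nat.div_le_div_right ht.1.le⟩
  have hinj : Set.InjOn (· / n) (residueTimes n L r) := fun a ha b hb hab => by
    simp only [residueTimes, coe_filter, mem_range, Set.mem_ofPred_eq] at ha hb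
    rw [← Nat.div_add_mod a n, ← Nat.div_add_mod b n, show a / n = b / n from hab, ha.2.2, hb.2.2]
  simpa using card_le_card_of_injOn _ hmaps hinj

def agreeTimes (n L r k : ℕ) (v : Fin n → Bool) (x : ℕ → Fin n → Bool) : Finset ℕ :=
  (residueTimes n L r).filter fun t => ∀ j ∈ outsideWindow n r k, x t j = v j

theorem card_filter_le_card_agreeTimes_mul_le {n L : ℕ} (h v : Fin n → Bool) (r k m : ℕ) :
    (univ.filter fun ω : Fin L → Bool =>
        m ≤ (agreeTimes n L r k v (coordLoop h (extBits ω))).card).card * 2 ^ (m * (n - k))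
      ≤ (residueTimes n L r).card.choose m * 2 ^ L := by
  set W := outsideWindow n r k
  let E : Finset ℕ → Finset (Fin L → Bool) := fun S =>
    univ.filter fun ω => ∀ t ∈ S, ∀ j ∈ W, coordLoop h (extBits ω) t j = v j
  have hsub : (univ.filter fun ω : Fin L → Bool =>
        m ≤ (agreeTimes n L r k v (coordLoop h (extBits ω))).card)
      ⊆ ((residueTimes n L r).powersetCard m).biUnion E := fun ω hω => by
    obtain ⟨S, hS, hSm⟩ := exists_subset_card_eq (mem_filter.1 hω).2
    refine mem_biUnion.2 ⟨S, mem_powersetCard.2 ⟨hS.trans (filter_subset _ _), hSm⟩, ?_⟩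
    exact mem_filter.2 ⟨mem_univ _, fun t ht => (mem_filter.1 (hS ht)).2⟩
  have hE : ∀ S ∈ (residueTimes n L r).powersetCard m, (E S).card * 2 ^ (m * (n - k)) ≤ 2 ^ L :=
    fun S hS => by
      obtain ⟨hSsub, rfl⟩ := mem_powersetCard.1 hS
      have hS' : ∀ t ∈ S, n ≤ t ∧ t < L ∧ t % n = r := fun t ht => by
        have := hSsub ht
        simp only [residueTimes, mem_filter, mem_range] at this
        exact ⟨this.2.1, this.1, this.2.2⟩
      refine le_trans ?_ (card_filter_forall_coordLoop_eq_mul_le h v S W hS')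
      gcongr
      · norm_num
      · exact sub_le_card_outsideWindow n r k
  calc _ ≤ (∑ S ∈ (residueTimes n L r).powersetCard m, (E S).card) * 2 ^ (m * (n - k)) := by
        gcongr
        exact (card_le_card hsub).trans card_biUnion_le
    _ = ∑ S ∈ (residueTimes n L r).powersetCard m, (E S).card * 2 ^ (m * (n - k)) := sum_mul ..
    _ ≤ ∑ S ∈ (residueTimes n L r).powersetCard m, 2 ^ L := sum_le_sum hE
    _ = _ := by rw [sum_const, card_powersetCard, smul_eq_mul]

theorem Nat.choose_mul_pow_self_le (M m : ℕ) : M.choose m * m ^ m ≤ (3 * M) ^ m := by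
  have hfact : ((m : ℝ) ^ m / m.factorial) ≤ 3 ^ m :=
    (Real.pow_div_factorial_le_exp _ (Nat.cast_nonneg m) m).trans <| by
      rw [← mul_one (m : ℝ), Real.exp_nat_mul]
      exact pow_le_pow_left₀ (Real.exp_pos 1).le Real.exp_one_lt_three.le m
  have : (M.choose m : ℝ) * m ^ m ≤ (3 * M) ^ m :=
    calc (M.choose m : ℝ) * m ^ m ≤ M ^ m / m.factorial * m ^ m := by
          gcongr; exact Nat.choose_le_pow_div m M
      _ = M ^ m * (m ^ m / m.factorial) := by ring
      _ ≤ M ^ m * 3 ^ m := by gcongr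
      _ = (3 * M) ^ m := by ring
  exact_mod_cast this

theorem choose_mul_four_pow_le {M m n d : ℕ} (hnm : n ≤ m) (hM : 12 * M ≤ m * 2 ^ d) :
    M.choose m * 4 ^ n ≤ 2 ^ (m * d) := by
  refine Nat.le_of_mul_le_mul_right ?_ (Nat.pow_self_pos (n := m))
  calc M.choose m * 4 ^ n * m ^ m ≤ M.choose m * m ^ m * 4 ^ m := by
        rw [mul_right_comm]; gcongr; norm_num
    _ ≤ (3 * M) ^ m * 4 ^ m := by gcongr; exact Nat.choose_mul_pow_self_le M m
    _ = (12 * M) ^ m := by rw [← mul_pow]; ring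
    _ ≤ (m * 2 ^ d) ^ m := by gcongr
    _ = 2 ^ (m * d) * m ^ m := by ring

theorem card_filter_le_card_agreeTimes_mul_four_pow_le {n L : ℕ} (hn : 12 ≤ n)
    (h v : Fin n → Bool) (r k : ℕ) :
    (univ.filter fun ω : Fin L → Bool =>
        n + L / 2 ^ (n - k) + 1 ≤ (agreeTimes n L r k v (coordLoop h (extBits ω))).card).card
      * 4 ^ n ≤ 2 ^ L := by
  set m := n + L / 2 ^ (n - k) + 1 with hm
  set M := (residueTimes n L r).card
  have hM : 12 * M ≤ m * 2 ^ (n - k) :=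
    calc 12 * M ≤ 12 * (L / n) := by gcongr; exact card_residueTimes_le (by omega) L r
      _ ≤ L / n * n := by rw [mul_comm]; gcongr
      _ ≤ L := Nat.div_mul_le_self L n
      _ ≤ 2 ^ (n - k) * (L / 2 ^ (n - k) + 1) := (Nat.lt_mul_div_succ L (by positivity)).le
      _ ≤ m * 2 ^ (n - k) := by rw [mul_comm]; exact Nat.mul_le_mul_right _ (by omega)
  have hnm : n ≤ m := by rw [hm, add_assoc]; exact Nat.le_add_right _ _
  have hchoose := choose_mul_four_pow_le hnm hM
  have hclass := card_filter_le_card_agreeTimes_mul_le (L := L) h v r k m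
  refine Nat.le_of_mul_le_mul_right (c := 2 ^ (m * (n - k))) ?_ (by positivity)
  calc _ = _ * 2 ^ (m * (n - k)) * 4 ^ n := mul_right_comm ..
    _ ≤ M.choose m * 2 ^ L * 4 ^ n := by gcongr
    _ = M.choose m * 4 ^ n * 2 ^ L := mul_right_comm ..
    _ ≤ 2 ^ (m * (n - k)) * 2 ^ L := by gcongr
    _ = _ := mul_comm ..

theorem card_filter_delta_eq_le {n L : ℕ} (hn : 0 < n) (x : ℕ → Fin n → Bool)
    (v : Fin n → Bool) (k : ℕ) :
    ((range L).filter fun t => delta n (x t) v (t % n) = k).card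
      ≤ n + ∑ r ∈ range n, (agreeTimes n L r k v x).card := by
  have hsub : ((range L).filter fun t => delta n (x t) v (t % n) = k)
      ⊆ range n ∪ (range n).biUnion fun r => agreeTimes n L r k v x := fun t ht => by
    obtain ⟨htL, hδ⟩ := mem_filter.1 ht
    by_cases htn : t < n
    · exact mem_union_left _ (mem_range.2 htn)
    refine mem_union_right _ (mem_biUnion.2 ⟨t % n, mem_range.2 (Nat.mod_lt t hn), ?_⟩)
    exact mem_filter.2 ⟨mem_filter.2 ⟨htL, by omega, rfl⟩, fun j hj => eq_of_delta_le hδ.le hj⟩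
  calc _ ≤ _ := card_le_card hsub
    _ ≤ _ := card_union_le _ _
    _ ≤ _ := by rw [card_range]; gcongr; exact card_biUnion_le

theorem exists_le_card_agreeTimes_of_not_isSparse {n L : ℕ} (hn : 0 < n)
    {x : ℕ → Fin n → Bool} (hx : ¬IsSparse 3 n L x) :
    ∃ v, ∃ k < n, ∃ r < n, n + L / 2 ^ (n - k) + 1 ≤ (agreeTimes n L r k v x).card := by
  simp only [IsSparse, not_forall, not_le] at hx
  obtain ⟨v, k, hk, hcount⟩ := hx
  suffices ∃ r < n, n + L / 2 ^ (n - k) + 1 ≤ (agreeTimes n L r k v x).card by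
    obtain ⟨r, hr, hcard⟩ := this
    refine ⟨v, k, lt_of_le_of_ne hk ?_, r, hr, hcard⟩
    intro hkn
    rw [hkn, Nat.sub_self, pow_zero, Nat.div_one] at hcard
    have : (agreeTimes n L r n v x).card ≤ L :=
      (card_le_card ((filter_subset _ _).trans (filter_subset _ _))).trans (card_range L).le
    omega
  by_contra! hsmall
  have hsum : ((range L).filter fun t => delta n (x t) v (t % n) = k).card
      ≤ n + n * (n + L / 2 ^ (n - k)) := by
    refine (card_filter_delta_eq_le hn x v k).trans (Nat.add_le_add_left ?_ n)
    simpa using sum_le_card_nsmul (range n) _ _ fun r hr =>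
      Nat.lt_succ_iff.1 (hsmall r (mem_range.1 hr))
  have hdiv : ((L / 2 ^ (n - k) : ℕ) : ℝ) ≤ (L : ℝ) / 2 ^ (n - k) := by
    exact_mod_cast Nat.cast_div_le
  have hn1 : (1 : ℝ) ≤ n := by exact_mod_cast hn
  have hsumR : (((range L).filter fun t => delta n (x t) v (t % n) = k).card : ℝ)
      ≤ n + n * (n + ((L / 2 ^ (n - k) : ℕ) : ℝ)) := by exact_mod_cast hsum
  nlinarith [(Nat.cast_nonneg (L / 2 ^ (n - k)) : (0 : ℝ) ≤ _)]

theorem card_not_isSparse_mul_two_pow_le {n L : ℕ} (hn : 12 ≤ n) (h : Fin n → Bool) :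
    Nat.card {ω : Fin L → Bool // ¬IsSparse 3 n L (coordLoop h (extBits ω))} * 2 ^ n
      ≤ n ^ 2 * 2 ^ L := by
  classical
  let Q : Finset ((Fin n → Bool) × ℕ × ℕ) := univ ×ˢ range n ×ˢ range n
  let E : (Fin n → Bool) × ℕ × ℕ → Finset (Fin L → Bool) := fun q =>
    univ.filter fun ω => n + L / 2 ^ (n - q.2.1) + 1
      ≤ (agreeTimes n L q.2.2 q.2.1 q.1 (coordLoop h (extBits ω))).card
  set bad := univ.filter fun ω : Fin L → Bool => ¬IsSparse 3 n L (coordLoop h (extBits ω))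
  have hsub : bad ⊆ Q.biUnion E := fun ω hω => by
    obtain ⟨v, k, hk, r, hr, hcard⟩ :=
      exists_le_card_agreeTimes_of_not_isSparse (by omega) (mem_filter.1 hω).2
    exact mem_biUnion.2 ⟨(v, k, r), by simp [Q, hk, hr], mem_filter.2 ⟨mem_univ _, hcard⟩⟩
  rw [Nat.card_eq_fintype_card, Fintype.card_subtype]
  have hfour : bad.card * 4 ^ n ≤ 2 ^ n * (n * n) * 2 ^ L :=
    calc bad.card * 4 ^ n ≤ (∑ q ∈ Q, (E q).card) * 4 ^ n := by
          gcongr; exact (card_le_card hsub).trans card_biUnion_le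
      _ = ∑ q ∈ Q, (E q).card * 4 ^ n := sum_mul ..
      _ ≤ ∑ _q ∈ Q, 2 ^ L := sum_le_sum fun q _ =>
          card_filter_le_card_agreeTimes_mul_four_pow_le hn h q.1 q.2.2 q.2.1
      _ = 2 ^ n * (n * n) * 2 ^ L := by simp [Q, card_product]
  rw [show (4 : ℕ) ^ n = 2 ^ n * 2 ^ n by rw [← mul_pow]; norm_num] at hfour
  exact Nat.le_of_mul_le_mul_right (by linarith) (by positivity : 0 < 2 ^ n)

theorem one_sub_le_unifPr {Ω : Type*} [Fintype Ω] [Nonempty Ω] (P : Ω → Prop) {ε : ℝ}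
    (h : (Nat.card {ω // ¬P ω} : ℝ) ≤ ε * Fintype.card Ω) : 1 - ε ≤ unifPr P := by
  classical
  have hsplit : Nat.card {ω // P ω} + Nat.card {ω // ¬P ω} = Fintype.card Ω := by
    rw [Nat.card_eq_fintype_card, Nat.card_eq_fintype_card, Fintype.card_subtype,
      Fintype.card_subtype, ← card_univ]
    exact card_filter_add_card_filter_not P
  have hpos : (0 : ℝ) < Fintype.card Ω := by exact_mod_cast Fintype.card_pos
  have : (Nat.card {ω // P ω} : ℝ) + Nat.card {ω // ¬P ω} = Fintype.card Ω := by
    exact_mod_cast hsplit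
  rw [unifPr, le_div_iff₀ hpos]
  linarith

/-- **Almost all snakes are sparse.** There is a universal constant `c > 0` such that
for all sufficiently large `n` and every `h ∈ {0,1}^n`, with `L = ⌊2^{n/2}/100⌋`, a
snake drawn from the snake distribution `D_{h,L}` on `{0,1}^n` is `c`-sparse with
probability at least `1 - n²·2^{-n}`. -/
theorem stmt_9 :
    ∃ c > (0 : ℝ), ∃ n₀ : ℕ, ∀ n, n₀ ≤ n → ∀ h : Fin n → Bool,
      ∀ L : ℕ, L = ⌊(2 : ℝ) ^ ((n : ℝ) / 2) / 100⌋₊ →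
        1 - (n : ℝ) ^ 2 / 2 ^ n
          ≤ unifPr (fun ω : Fin L → Bool => IsSparse c n L (coordLoop h (extBits ω))) := by
  refine ⟨3, by norm_num, 12, fun n hn h L _ => one_sub_le_unifPr _ ?_⟩
  have hbad := card_not_isSparse_mul_two_pow_le (L := L) hn h
  rw [Fintype.card_fun, Fintype.card_bool, Fintype.card_fin, div_mul_eq_mul_div,
    le_div_iff₀ (by positivity)]
  exact_mod_cast hbad
end

section
/- Let S be a finite set with |S| = N ≥ 1, let f : S → ℝ be injective, let m ≥ 1, and let s_1, …, s_m be independent uniformly random elements of S. Let v_0 be an element of {s_1,…,s_m} minimizing f. Then the expected number of elements u ∈ S with f(u) < f(v_0) is at most N/m. -/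
open Finset

lemma aux_pow (N m : ℕ) : N^(m+1) + (m+1)*N^m ≤ (N+1)^(m+1) := by
  induction m with
  | zero => simp
  | succ m ih =>
    have h1 : (N+1)^(m+2) = (N+1) * (N+1)^(m+1) := by ring
    have h2 : N^(m+1) = N * N^m := by ring
    calc N^(m+2) + (m+2)*N^(m+1)
        ≤ N^(m+2) + (m+2)*N^(m+1) + (m+1)*N^m := Nat.le_add_right _ _
      _ = (N+1)*(N^(m+1) + (m+1)*N^m) := by ring
      _ ≤ (N+1)*(N+1)^(m+1) := Nat.mul_le_mul_left _ ih
      _ = (N+1)^(m+2) := h1.symm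

lemma aux_sum (N m : ℕ) : (m+1) * ∑ j ∈ range N, j^m ≤ N^(m+1) := by
  induction N with
  | zero => simp
  | succ N ih =>
    rw [Finset.sum_range_succ, Nat.mul_add]
    calc (m+1) * ∑ j ∈ range N, j^m + (m+1) * N^m
        ≤ N^(m+1) + (m+1)*N^m := Nat.add_le_add_right ih _
      _ ≤ (N+1)^(m+1) := aux_pow N m

/-- **Counting step of the quantum steepest-descent upper bound.** Let `S` be a finite
set of size `N ≥ 1`, let `f : S → ℝ` be injective, and let `s_1, …, s_m` (`m ≥ 1`) be
independent uniform samples from `S`. If `v₀ = v₀(ω)` is an element of the sample set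
minimizing `f`, then the expected number of `u ∈ S` with `f u < f v₀` is at most `N/m`. -/
theorem stmt_15 {S : Type*} [Fintype S] (N : ℕ) (hN : N = Fintype.card S) (hN1 : 1 ≤ N)
    (f : S → ℝ) (hf : Function.Injective f) (m : ℕ) (hm : 1 ≤ m)
    (v₀ : (Fin m → S) → S)
    (hmem : ∀ ω : Fin m → S, ∃ r, v₀ ω = ω r)
    (hmin : ∀ (ω : Fin m → S) (r : Fin m), f (v₀ ω) ≤ f (ω r)) :
    (∑ ω : Fin m → S, (Nat.card {u : S // f u < f (v₀ ω)} : ℝ))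
        / (Fintype.card (Fin m → S) : ℝ)
      ≤ (N : ℝ) / m := by
  classical
  set g : S → ℕ := fun u => (univ.filter fun s => f u < f s).card with hg
  -- count rewrite
  have hcount : ∀ ω : Fin m → S,
      Nat.card {u : S // f u < f (v₀ ω)}
        = (univ.filter fun u : S => ∀ r, f u < f (ω r)).card := by
    intro ω
    rw [Nat.card_eq_fintype_card, Fintype.card_subtype]
    apply Finset.card_bij (fun u _ => u)
    · intro u hu
      simp only [mem_filter, mem_univ, true_and] at hu ⊢
      exact fun r => lt_of_lt_of_le hu (hmin ω r)
    · intro u v _ _ h; exact h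
    · intro u hu
      simp only [mem_filter, mem_univ, true_and] at hu
      refine ⟨u, ?_, rfl⟩
      simp only [mem_filter, mem_univ, true_and]
      obtain ⟨r, hr⟩ := hmem ω
      rw [hr]; exact hu r
  -- per-u count
  have hper : ∀ u : S, (univ.filter fun ω : Fin m → S => ∀ r, f u < f (ω r)).card
      = (g u)^m := by
    intro u
    rw [← Fintype.card_subtype]
    have e : {ω : Fin m → S // ∀ r, f u < f (ω r)} ≃ (Fin m → {s : S // f u < f s}) :=
      Equiv.subtypePiEquivPi (p := fun _ s => f u < f s)
    rw [Fintype.card_congr e, Fintype.card_fun, Fintype.card_fin, Fintype.card_subtype]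
  -- swap sum
  have hswap : (∑ ω : Fin m → S,
      (univ.filter fun u : S => ∀ r, f u < f (ω r)).card) = ∑ u : S, (g u)^m := by
    simp only [Finset.card_filter]
    rw [Finset.sum_comm]
    refine Finset.sum_congr rfl fun u _ => ?_
    rw [← Finset.card_filter, hper]
  -- g strictly antitone wrt f order
  have key : ∀ u v : S, f u < f v → g v < g u := by
    intro u v h
    apply Finset.card_lt_card
    rw [Finset.ssubset_iff_of_subset]
    · refine ⟨v, ?_, ?_⟩
      · simp only [mem_filter, mem_univ, true_and]; exact h
      · simp
    · intro s hs
      simp only [mem_filter, mem_univ, true_and] at hs ⊢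
      exact h.trans hs
  have hginj : Function.Injective g := by
    intro u v huv
    by_contra hne
    rcases lt_or_gt_of_ne (fun h : f u = f v => hne (hf h)) with h|h
    · exact absurd huv.symm (Nat.ne_of_lt (key u v h))
    · exact absurd huv (Nat.ne_of_lt (key v u h))
  have hglt : ∀ u : S, g u < N := by
    intro u
    rw [hN, ← Finset.card_univ]
    apply Finset.card_lt_card
    rw [Finset.ssubset_iff_of_subset (Finset.filter_subset _ _)]
    exact ⟨u, Finset.mem_univ u, by simp⟩
  have himg : (∑ u : S, (g u)^m) ≤ ∑ j ∈ range N, j^m := by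
    rw [← Finset.sum_image (f := fun j => j^m)
      (fun u _ v _ h => hginj h)]
    apply Finset.sum_le_sum_of_subset
    intro j hj
    simp only [Finset.mem_image] at hj
    obtain ⟨u, _, rfl⟩ := hj
    exact Finset.mem_range.mpr (hglt u)
  -- total bound in ℕ
  have htot : m * (∑ ω : Fin m → S, Nat.card {u : S // f u < f (v₀ ω)}) ≤ N^(m+1) := by
    calc m * (∑ ω : Fin m → S, Nat.card {u : S // f u < f (v₀ ω)})
        = m * ∑ u : S, (g u)^m := by
          rw [← hswap]; congr 1; exact Finset.sum_congr rfl fun ω _ => hcount ω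
      _ ≤ (m+1) * ∑ j ∈ range N, j^m := by
          exact Nat.mul_le_mul (Nat.le_succ m) himg
      _ ≤ N^(m+1) := aux_sum N m
  -- finish
  have hcardfun : (Fintype.card (Fin m → S) : ℝ) = (N : ℝ)^m := by
    rw [Fintype.card_fun, Fintype.card_fin, hN]; push_cast; ring
  have hNpos : (0:ℝ) < (N:ℝ)^m := by positivity
  have hmpos : (0:ℝ) < (m:ℝ) := by exact_mod_cast hm
  rw [hcardfun, div_le_div_iff₀ hNpos hmpos]
  have : ((∑ ω : Fin m → S, Nat.card {u : S // f u < f (v₀ ω)}) : ℝ) * m ≤ (N:ℝ)^(m+1) := by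
    rw [mul_comm]
    exact_mod_cast htot
  calc (∑ ω : Fin m → S, (Nat.card {u : S // f u < f (v₀ ω)} : ℝ)) * m
      = ((∑ ω : Fin m → S, Nat.card {u : S // f u < f (v₀ ω)}) : ℝ) * m := by push_cast; ring
    _ ≤ (N:ℝ)^(m+1) := this
    _ = (N:ℝ) * (N:ℝ)^m := by ring
end
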